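/- Let G be the directed m-cycle, Y, Ỹ ∈ ℝ^{n×V}, S = range(Y I_E), and A = Y A_{k=1} Ỹᵀ. Then the following are equivalent: (i) for all edge labels k ∈ ℝ^E_+ and all complex-balanced equilibria x* ∈ Z_k, there exists P ∈ 𝒟₊ with P J(x*) + J(x*)ᵀ P < 0 on S (diagonal stability on S); (ii) A is diagonally D-stable on S, i.e., for every D ∈ 𝒟₊ there exists P ∈ 𝒟₊ with PAD + DAᵀP < 0 on S. -/

import Mathlib

open Matrix Polynomial Filter Topology

noncomputable section

/-- `D ∈ 𝒟₊`: a diagonal matrix with positive diagonal entries. -/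
def IsPosDiag {n : ℕ} (D : Matrix (Fin n) (Fin n) ℝ) : Prop :=
  ∃ d : Fin n → ℝ, (∀ i, 0 < d i) ∧ D = Matrix.diagonal d

/-- A real square matrix is stable if every root in `ℂ` of its characteristic
polynomial has negative real part. -/
def IsStableMat {n : ℕ} (A : Matrix (Fin n) (Fin n) ℝ) : Prop :=
  ∀ z : ℂ, (A.charpoly.map (algebraMap ℝ ℂ)).IsRoot z → z.re < 0

/-- A real square matrix is semistable if every root in `ℂ` of its characteristic
polynomial has non-positive real part. -/
def IsSemistableMat {n : ℕ} (A : Matrix (Fin n) (Fin n) ℝ) : Prop :=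
  ∀ z : ℂ, (A.charpoly.map (algebraMap ℝ ℂ)).IsRoot z → z.re ≤ 0

/-- The restriction `A|_S : S → S` of a matrix whose range is contained in `S`. -/
def restrictedMap {n : ℕ} (A : Matrix (Fin n) (Fin n) ℝ) (S : Submodule ℝ (Fin n → ℝ))
    (h : ∀ v, A.mulVec v ∈ S) : S →ₗ[ℝ] S :=
  A.mulVecLin.restrict (p := S) (q := S) (fun x _ => by simpa using h x)

/-- `A` is stable on `S`: `range A ⊆ S` and every eigenvalue over `ℂ` (root of the
characteristic polynomial) of `A|_S : S → S` has negative real part. -/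
def IsStableOn {n : ℕ} (A : Matrix (Fin n) (Fin n) ℝ) (S : Submodule ℝ (Fin n → ℝ)) : Prop :=
  ∃ h : ∀ v, A.mulVec v ∈ S,
    ∀ z : ℂ, (((restrictedMap A S h).charpoly).map (algebraMap ℝ ℂ)).IsRoot z → z.re < 0

/-- `A` is semistable on `S`: `range A ⊆ S` and every eigenvalue over `ℂ` of
`A|_S : S → S` has non-positive real part. -/
def IsSemistableOn {n : ℕ} (A : Matrix (Fin n) (Fin n) ℝ) (S : Submodule ℝ (Fin n → ℝ)) : Prop :=
  ∃ h : ∀ v, A.mulVec v ∈ S,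
    ∀ z : ℂ, (((restrictedMap A S h).charpoly).map (algebraMap ℝ ℂ)).IsRoot z → z.re ≤ 0

/-- `M < 0` on `S`. -/
def NegDefOn {n : ℕ} (M : Matrix (Fin n) (Fin n) ℝ) (S : Submodule ℝ (Fin n → ℝ)) : Prop :=
  ∀ x ∈ S, x ≠ 0 → x ⬝ᵥ M.mulVec x < 0

/-- `M ≤ 0` on `S`. -/
def NegSemidefOn {n : ℕ} (M : Matrix (Fin n) (Fin n) ℝ) (S : Submodule ℝ (Fin n → ℝ)) : Prop :=
  ∀ x ∈ S, x ⬝ᵥ M.mulVec x ≤ 0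

/-- `M > 0` on `S`. -/
def PosDefOn {n : ℕ} (M : Matrix (Fin n) (Fin n) ℝ) (S : Submodule ℝ (Fin n → ℝ)) : Prop :=
  ∀ x ∈ S, x ≠ 0 → 0 < x ⬝ᵥ M.mulVec x

/-- The Laplacian matrix `A_k` of the labeled digraph `(V,E)` with edge labels `k`:
`(A_k)_{i',i} = k_{i→i'}` if `(i→i') ∈ E`, `(A_k)_{i,i} = -∑_{(i→i')∈E} k_{i→i'}`,
and `0` otherwise (the graph has no self-loops). -/
def laplacian {m : ℕ} (E : Finset (Fin m × Fin m)) (k : Fin m × Fin m → ℝ) :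
    Matrix (Fin m) (Fin m) ℝ :=
  fun i' i => (if (i, i') ∈ E then k (i, i') else 0)
    - (if i' = i then ∑ e ∈ E.filter (fun e => e.1 = i), k e else 0)

/-- The incidence matrix `I_E ∈ ℝ^{V×E}`, with column `e_{i'} - e_i` for each edge `(i→i')`. -/
def incidence {m : ℕ} (E : Finset (Fin m × Fin m)) :
    Matrix (Fin m) {e : Fin m × Fin m // e ∈ E} ℝ :=
  fun i e => (if (e : Fin m × Fin m).2 = i then (1 : ℝ) else 0)
    - (if (e : Fin m × Fin m).1 = i then 1 else 0)

/-- `x^Ỹ ∈ ℝ^V`, defined by `(x^Ỹ)_j = ∏_i x_i ^ (Ỹ)_{ij}` (real exponents). -/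
def powVec {n m : ℕ} (x : Fin n → ℝ) (Yt : Matrix (Fin n) (Fin m) ℝ) : Fin m → ℝ :=
  fun j => ∏ i, (x i) ^ (Yt i j)

/-- The digraph `(V,E)` is weakly reversible: every connected component is strongly
connected, i.e. whenever `a` and `b` are connected by an undirected path, there is a
directed path from `a` to `b`. -/
def WeaklyReversible {m : ℕ} (E : Finset (Fin m × Fin m)) : Prop :=
  ∀ a b : Fin m,
    Relation.ReflTransGen (fun u v => (u, v) ∈ E ∨ (v, u) ∈ E) a b →
    Relation.ReflTransGen (fun u v => (u, v) ∈ E) a b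

/-- The stoichiometric subspace `S = range (Y I_E)`. -/
def stoichSubspace {n m : ℕ} (Y : Matrix (Fin n) (Fin m) ℝ) (E : Finset (Fin m × Fin m)) :
    Submodule ℝ (Fin n → ℝ) :=
  LinearMap.range (Y * incidence E).mulVecLin

/-- The Jacobian matrix `J(x) = Y A_k diag(x^Ỹ) Ỹᵀ diag(x⁻¹)` of `x ↦ Y A_k x^Ỹ`. -/
def jacobianMat {n m : ℕ} (E : Finset (Fin m × Fin m)) (k : Fin m × Fin m → ℝ)
    (Y Yt : Matrix (Fin n) (Fin m) ℝ) (x : Fin n → ℝ) : Matrix (Fin n) (Fin n) ℝ :=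
  Y * laplacian E k * Matrix.diagonal (powVec x Yt) * Ytᵀ * Matrix.diagonal (fun i => (x i)⁻¹)

/-- `C` is (the edge set of) a cycle: `{i_1→i_2, …, i_{r-1}→i_r, i_r→i_1}` with
pairwise distinct vertices `i_1, …, i_r` (and `r ≥ 2`). -/
def IsCycleEdges {m : ℕ} (C : Finset (Fin m × Fin m)) : Prop :=
  ∃ (r : ℕ) (f : Fin (r + 2) → Fin m), Function.Injective f ∧
    C = Finset.image (fun j => (f j, f (j + 1))) Finset.univ

/-- The edge set of the directed `m`-cycle `1 → 2 → ⋯ → m → 1`. -/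
def cycleEdges (m : ℕ) [NeZero m] : Finset (Fin m × Fin m) :=
  Finset.image (fun i : Fin m => (i, i + 1)) Finset.univ

end

section Aux

variable {m : ℕ} [NeZero m]

lemma mem_cycleEdges (a b : Fin m) : (a, b) ∈ cycleEdges m ↔ b = a + 1 := by
  constructor
  · intro h
    simp only [cycleEdges, Finset.mem_image, Finset.mem_univ, true_and] at h
    obtain ⟨i, hi⟩ := h
    obtain ⟨h1, h2⟩ := Prod.mk.inj hi
    subst h1; subst h2; rfl
  · rintro rfl
    simp [cycleEdges]

lemma filter_cycleEdges (i : Fin m) :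
    (cycleEdges m).filter (fun e => e.1 = i) = {(i, i + 1)} := by
  ext e
  simp only [Finset.mem_filter, Finset.mem_singleton]
  constructor
  · rintro ⟨he, h1⟩
    obtain ⟨a, b⟩ := e
    simp only at h1
    subst h1
    rw [mem_cycleEdges] at he
    subst he; rfl
  · rintro rfl
    exact ⟨(mem_cycleEdges _ _).2 rfl, rfl⟩

lemma laplacian_cycle_apply (k : Fin m × Fin m → ℝ) (i' i : Fin m) :
    laplacian (cycleEdges m) k i' i =
      (if i' = i + 1 then k (i, i + 1) else 0) - (if i' = i then k (i, i + 1) else 0) := by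
  unfold laplacian
  rw [filter_cycleEdges, Finset.sum_singleton]
  congr 1
  by_cases h : i' = i + 1
  · subst h
    rw [if_pos ((mem_cycleEdges _ _).2 rfl), if_pos rfl]
  · rw [if_neg (fun hc => h ((mem_cycleEdges _ _).1 hc)), if_neg h]

lemma lap_mul_diag (k : Fin m × Fin m → ℝ) (w : Fin m → ℝ) (c : ℝ)
    (hc : ∀ i, k (i, i + 1) * w i = c) :
    laplacian (cycleEdges m) k * Matrix.diagonal w
      = c • laplacian (cycleEdges m) (fun _ => (1 : ℝ)) := by
  ext i' i
  rw [Matrix.mul_diagonal, Matrix.smul_apply, laplacian_cycle_apply, laplacian_cycle_apply,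
    smul_eq_mul]
  have := hc i
  split_ifs <;> nlinarith [hc i]

lemma sum_if_shift (i' : Fin m) (f : Fin m → ℝ) :
    ∑ i, (if i' = i + 1 then f i else 0) = f (i' - 1) := by
  have key : ∀ i : Fin m, (if i' = i + 1 then f i else 0) = (if i = i' - 1 then f i else 0) := by
    intro i
    refine if_congr ?_ rfl rfl
    constructor
    · rintro rfl; simp
    · rintro rfl; simp
  rw [Finset.sum_congr rfl fun i _ => key i]
  simp [Finset.sum_ite_eq']

lemma lap_mulVec (k : Fin m × Fin m → ℝ) (w : Fin m → ℝ) (i' : Fin m) :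
    (laplacian (cycleEdges m) k).mulVec w i'
      = k (i' - 1, i' - 1 + 1) * w (i' - 1) - k (i', i' + 1) * w i' := by
  simp only [Matrix.mulVec, dotProduct, laplacian_cycle_apply, sub_mul, ite_mul, zero_mul]
  rw [Finset.sum_sub_distrib, sum_if_shift i' (fun i => k (i, i + 1) * w i)]
  congr 1
  rw [Finset.sum_ite_eq]
  simp

open Fin.NatCast in
lemma const_of_step (g : Fin m → ℝ) (h : ∀ j, g (j + 1) = g j) : ∀ i, g i = g 0 := by
  have key : ∀ r : ℕ, g (r : Fin m) = g 0 := by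
    intro r
    induction r with
    | zero => simp
    | succ r ih => rw [Nat.cast_add_one, h]; exact ih
  intro i
  have := key i.val
  rwa [Fin.cast_val_eq_self] at this

omit [NeZero m] in
lemma powVec_pos {n : ℕ} {x : Fin n → ℝ} (hx : ∀ i, 0 < x i)
    (Yt : Matrix (Fin n) (Fin m) ℝ) (j : Fin m) : 0 < powVec x Yt j :=
  Finset.prod_pos fun i _ => Real.rpow_pos_of_pos (hx i) _

lemma negDefOn_smul {n : ℕ} {M : Matrix (Fin n) (Fin n) ℝ} {S : Submodule ℝ (Fin n → ℝ)}
    (c : ℝ) (hc : 0 < c) (h : NegDefOn M S) : NegDefOn (c • M) S := by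
  intro v hv hv0
  rw [Matrix.smul_mulVec, dotProduct_smul, smul_eq_mul]
  exact mul_neg_of_pos_of_neg hc (h v hv hv0)

lemma jacobian_eq {n : ℕ} (k : Fin m × Fin m → ℝ) (Y Yt : Matrix (Fin n) (Fin m) ℝ)
    (x : Fin n → ℝ) (c : ℝ) (hc : ∀ i, k (i, i + 1) * powVec x Yt i = c) :
    jacobianMat (cycleEdges m) k Y Yt x
      = c • (Y * laplacian (cycleEdges m) (fun _ => 1) * Ytᵀ *
          Matrix.diagonal fun i => (x i)⁻¹) := by
  unfold jacobianMat
  rw [Matrix.mul_assoc Y, lap_mul_diag k _ c hc]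
  simp [Matrix.mul_smul, Matrix.smul_mul, Matrix.mul_assoc]

end Aux

/-- for the directed `m`-cycle, all complex-balanced equilibria are diagonally
stable on `S` (for all rate constants) iff `A = Y A_{k=1} Ỹᵀ` is diagonally D-stable on `S`. -/
theorem stmt13 {n : ℕ} (m : ℕ) [NeZero m] (hm : 2 ≤ m)
    (Y Yt : Matrix (Fin n) (Fin m) ℝ) :
    (∀ k : Fin m × Fin m → ℝ, (∀ e ∈ cycleEdges m, 0 < k e) →
      ∀ x : Fin n → ℝ, (∀ i, 0 < x i) →
        (laplacian (cycleEdges m) k).mulVec (powVec x Yt) = 0 →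
        ∃ P, IsPosDiag P ∧
          NegDefOn (P * jacobianMat (cycleEdges m) k Y Yt x +
              (jacobianMat (cycleEdges m) k Y Yt x)ᵀ * P)
            (stoichSubspace Y (cycleEdges m))) ↔
    (∀ D, IsPosDiag D → ∃ P, IsPosDiag P ∧
      NegDefOn (P * (Y * laplacian (cycleEdges m) (fun _ => 1) * Ytᵀ) * D +
          D * (Y * laplacian (cycleEdges m) (fun _ => 1) * Ytᵀ)ᵀ * P)
        (stoichSubspace Y (cycleEdges m))) := by
  constructor
  · -- (i) → (ii)
    intro H D hD
    obtain ⟨d, hd, rfl⟩ := hD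
    set x : Fin n → ℝ := fun i => (d i)⁻¹ with hxdef
    have hxpos : ∀ i, 0 < x i := fun i => inv_pos.2 (hd i)
    set w := powVec x Yt with hwdef
    have hwpos : ∀ j, 0 < w j := fun j => powVec_pos hxpos Yt j
    set k : Fin m × Fin m → ℝ := fun e => (w e.1)⁻¹ with hkdef
    have hkc : ∀ i : Fin m, k (i, i + 1) * w i = 1 := fun i =>
      inv_mul_cancel₀ (hwpos i).ne'
    have hkpos : ∀ e ∈ cycleEdges m, 0 < k e := fun e _ => inv_pos.2 (hwpos e.1)
    have heq : (laplacian (cycleEdges m) k).mulVec w = 0 := by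
      ext i'
      rw [lap_mulVec]
      have h1 := hkc (i' - 1)
      have h2 := hkc i'
      simp only [Pi.zero_apply]
      rw [h1, h2]
      ring
    obtain ⟨P, hP, hneg⟩ := H k hkpos x hxpos heq
    refine ⟨P, hP, ?_⟩
    have hJ : jacobianMat (cycleEdges m) k Y Yt x
        = Y * laplacian (cycleEdges m) (fun _ => 1) * Ytᵀ * Matrix.diagonal d := by
      have h := jacobian_eq k Y Yt x 1 hkc
      rw [one_smul] at h
      rw [h]
      congr 1
      congr 1
      funext i
      simp [hxdef]
    have hconv : P * jacobianMat (cycleEdges m) k Y Yt x +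
        (jacobianMat (cycleEdges m) k Y Yt x)ᵀ * P =
        P * (Y * laplacian (cycleEdges m) (fun _ => 1) * Ytᵀ) * Matrix.diagonal d +
          Matrix.diagonal d * (Y * laplacian (cycleEdges m) (fun _ => 1) * Ytᵀ)ᵀ * P := by
      rw [hJ, Matrix.transpose_mul, Matrix.diagonal_transpose]
      simp only [Matrix.mul_assoc]
    rw [← hconv]
    exact hneg
  · -- (ii) → (i)
    intro H k hkpos x hxpos heq
    set w := powVec x Yt with hwdef
    have hwpos : ∀ j, 0 < w j := fun j => powVec_pos hxpos Yt j
    set g : Fin m → ℝ := fun i => k (i, i + 1) * w i with hgdef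
    have hstep : ∀ j : Fin m, g (j + 1) = g j := by
      intro j
      have h := congrFun heq (j + 1)
      rw [lap_mulVec] at h
      simp only [Pi.zero_apply, add_sub_cancel_right] at h
      have := sub_eq_zero.1 h
      simpa [hgdef] using this.symm
    have hc : ∀ i, g i = g 0 := const_of_step g hstep
    have hc0 : 0 < g 0 :=
      mul_pos (hkpos _ ((mem_cycleEdges _ _).2 rfl)) (hwpos 0)
    set D : Matrix (Fin n) (Fin n) ℝ := Matrix.diagonal fun i => (x i)⁻¹ with hDdef
    have hD : IsPosDiag D := ⟨_, fun i => inv_pos.2 (hxpos i), rfl⟩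
    obtain ⟨P, hP, hneg⟩ := H D hD
    refine ⟨P, hP, ?_⟩
    have hJ : jacobianMat (cycleEdges m) k Y Yt x
        = (g 0) • (Y * laplacian (cycleEdges m) (fun _ => 1) * Ytᵀ * D) :=
      jacobian_eq k Y Yt x (g 0) hc
    have hconv : P * jacobianMat (cycleEdges m) k Y Yt x +
        (jacobianMat (cycleEdges m) k Y Yt x)ᵀ * P =
        (g 0) • (P * (Y * laplacian (cycleEdges m) (fun _ => 1) * Ytᵀ) * D +
          D * (Y * laplacian (cycleEdges m) (fun _ => 1) * Ytᵀ)ᵀ * P) := by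
      rw [hJ, Matrix.transpose_smul, Matrix.transpose_mul, hDdef, Matrix.diagonal_transpose]
      simp only [Matrix.mul_smul, Matrix.smul_mul, smul_add, Matrix.mul_assoc]
    rw [hconv]
    exact negDefOn_smul _ hc0 hneg
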